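/- arXiv:2311.14317 — 5 statements merged into one kernel-verified Lean document; each statement's English description precedes it below -/
import Mathlib

section
/- Assume (A1), h, τ > 0, and D : ℝ^d × [0,T] → ℝ bounded and nonnegative. Let (U^n) and (V^n) be solutions of the scheme (S) with bounded initial data U^0 and V^0 respectively. Then ‖U^n − V^n‖_{L^∞(ℝ^d)} ≤ ‖U^0 − V^0‖_{L^∞(ℝ^d)} for all n ≥ 0 with t_n ≤ T. -/
/-!
Both the L1 derivative and `L_h` are linear, so `U - V` solves the scheme again and it suffices
to bound a single solution `W`. At level `n` the scheme reads `c (W n - H) = D L_h[W n]` with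
`c = τ ^ (-α) / Γ(2 - α)`, where `H` is a convex combination of the earlier levels: the L1
weights `b (n-k-1) - b (n-k)` are nonnegative by concavity of `t ↦ t ^ (1 - α)` and telescope
with `b (n-1)` to `b 0 = 1`. Moreover `L_h[W n] x + 2 Ω W n x`, with `Ω = ∑ ω`, is an
`ω`-weighted sum of values of `W n`. With `S = sup |W n|` and `Dm` a bound for `D` this gives
`(c + 2 Dm Ω) |W n x| ≤ c M + 2 Dm Ω S` for every `x`, and taking the supremum, `S ≤ M`.
-/
open MeasureTheory Real Filter Set

noncomputable section

/-- Discrete grid point `hβ` in `ℝ^d`. -/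
def zvec (d : ℕ) (h : ℝ) (β : Fin d → ℤ) : EuclideanSpace ℝ (Fin d) :=
  WithLp.toLp 2 (fun i => h * (β i : ℝ))

/-- Assumption (A1): symmetric nonnegative summable weights. -/
def A1 (d : ℕ) (ω : (Fin d → ℤ) → ℝ) : Prop :=
  (∀ β : Fin d → ℤ, ω β = ω (-β)) ∧ (∀ β : Fin d → ℤ, 0 ≤ ω β) ∧
    Summable (fun β : {β : Fin d → ℤ // β ≠ 0} => ω β.1)

/-- Assumption (A2): moment condition on the weights. -/
def A2 (d : ℕ) (h : ℝ) (ω : (Fin d → ℤ) → ℝ) (r Cr : ℝ) : Prop :=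
  Summable (fun β : {β : Fin d → ℤ // β ≠ 0} => min (‖zvec d h β.1‖ ^ r) 1 * ω β.1) ∧
    ∑' β : {β : Fin d → ℤ // β ≠ 0}, min (‖zvec d h β.1‖ ^ r) 1 * ω β.1 ≤ Cr

/-- The discrete diffusion operator `L_h`. -/
def Lh (d : ℕ) (h : ℝ) (ω : (Fin d → ℤ) → ℝ) (ψ : EuclideanSpace ℝ (Fin d) → ℝ)
    (x : EuclideanSpace ℝ (Fin d)) : ℝ :=
  ∑' β : {β : Fin d → ℤ // β ≠ 0},
    (ψ (x + zvec d h β.1) + ψ (x - zvec d h β.1) - 2 * ψ x) * ω β.1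

/-- The L1 coefficients `b_i = (i+1)^{1-α} - i^{1-α}`. -/
def bcoef (α : ℝ) (i : ℕ) : ℝ := ((i : ℝ) + 1) ^ (1 - α) - (i : ℝ) ^ (1 - α)

/-- The L1 discrete Caputo derivative of a sequence. -/
def capD (α τ : ℝ) (v : ℕ → ℝ) (n : ℕ) : ℝ :=
  (τ ^ (-α) / Real.Gamma (2 - α)) *
    (v n - bcoef α (n - 1) * v 0 -
      ∑ k ∈ Finset.Icc 1 (n - 1), (bcoef α (n - k - 1) - bcoef α (n - k)) * v k)

/-- The L1 discrete Riemann–Liouville derivative of a sequence. -/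
def rlD (α τ : ℝ) (f : ℕ → ℝ) (n : ℕ) : ℝ :=
  (τ ^ (-α) / Real.Gamma (2 - α)) *
    (f n - ∑ k ∈ Finset.range n, (bcoef α (n - k - 1) - bcoef α (n - k)) * f k)

/-- Solution of the numerical scheme (S) on `[0,T]`:
a sequence of bounded functions satisfying the L1/`L_h` equation. -/
def SchemeSol (d : ℕ) (h τ α T : ℝ) (ω : (Fin d → ℤ) → ℝ)
    (D : EuclideanSpace ℝ (Fin d) → ℝ → ℝ)
    (U : ℕ → EuclideanSpace ℝ (Fin d) → ℝ) : Prop :=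
  (∀ n : ℕ, (n : ℝ) * τ ≤ T → ∃ M : ℝ, ∀ x, |U n x| ≤ M) ∧
  (∀ n : ℕ, 1 ≤ n → (n : ℝ) * τ ≤ T → ∀ x,
    capD α τ (fun m => U m x) n = D x ((n : ℝ) * τ) * Lh d h ω (U n) x)

/-- `‖φ‖_{X^r} ≤ K`, encoded via decomposed bounds. -/
def XNormLe (d : ℕ) (r K : ℝ) (φ : EuclideanSpace ℝ (Fin d) → ℝ) : Prop :=
  if r = 0 then ∀ x, |φ x| ≤ K
  else if r ≤ 1 then
    ∃ A B : ℝ, A + B ≤ K ∧ (∀ x, |φ x| ≤ A) ∧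
      ∀ x y : EuclideanSpace ℝ (Fin d), x ≠ y → |φ x - φ y| ≤ B * ‖x - y‖ ^ r
  else
    ∃ A B C : ℝ, A + B + C ≤ K ∧ (∀ x, |φ x| ≤ A) ∧
      (∀ x y : EuclideanSpace ℝ (Fin d), |φ x - φ y| ≤ B * ‖x - y‖) ∧
      Differentiable ℝ φ ∧
      ∀ x y : EuclideanSpace ℝ (Fin d), x ≠ y →
        ‖fderiv ℝ φ x - fderiv ℝ φ y‖ ≤ C * ‖x - y‖ ^ (r - 1)

/-- Continuous Caputo derivative. -/
def caputo (α : ℝ) (φ : ℝ → ℝ) (t : ℝ) : ℝ :=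
  (1 / Real.Gamma (1 - α)) *
    ((φ t - φ 0) / t ^ α + α * ∫ s in (0:ℝ)..t, (φ t - φ s) / (t - s) ^ (1 + α))

/-- Mittag-Leffler function `E_{α,β}`. -/
def mittagLeffler (α β z : ℝ) : ℝ := ∑' k : ℕ, z ^ k / Real.Gamma (α * k + β)

lemma bcoef_zero {α : ℝ} (hα : α < 1) : bcoef α 0 = 1 := by
  simp [bcoef, Real.zero_rpow (by linarith : (1 : ℝ) - α ≠ 0)]

lemma bcoef_nonneg {α : ℝ} (hα : α ≤ 1) (i : ℕ) : 0 ≤ bcoef α i := by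
  have : (i : ℝ) ^ (1 - α) ≤ ((i : ℝ) + 1) ^ (1 - α) :=
    Real.rpow_le_rpow (Nat.cast_nonneg i) (by linarith) (by linarith)
  simpa [bcoef] using this

lemma bcoef_antitone {α : ℝ} (hα : α ∈ Ioo (0 : ℝ) 1) : Antitone (bcoef α) := by
  refine antitone_nat_of_succ_le fun i => ?_
  have hconc := (Real.strictConcaveOn_rpow (p := 1 - α) (by linarith [hα.2])
    (by linarith [hα.1])).concaveOn
  have key := hconc.2 (mem_Ici.mpr (Nat.cast_nonneg i))
    (mem_Ici.mpr (by positivity : (0 : ℝ) ≤ (i : ℝ) + 2))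
    (by norm_num : (0 : ℝ) ≤ 1 / 2) (by norm_num : (0 : ℝ) ≤ 1 / 2) (by norm_num)
  have hmid : (1 / 2 : ℝ) • (i : ℝ) + (1 / 2 : ℝ) • ((i : ℝ) + 2) = (i : ℝ) + 1 := by
    simp only [smul_eq_mul]; ring
  rw [hmid, smul_eq_mul, smul_eq_mul] at key
  simp only [bcoef, Nat.cast_succ, add_assoc, one_add_one_eq_two]
  linarith

lemma sum_bcoef_sub_bcoef (α : ℝ) (m : ℕ) :
    ∑ k ∈ Finset.Icc 1 m, (bcoef α (m + 1 - k - 1) - bcoef α (m + 1 - k))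
      = bcoef α 0 - bcoef α m := by
  rw [← Finset.sum_range_sub' (bcoef α) m]
  refine Finset.sum_nbij' (fun k => m - k) (fun j => m - j) ?_ ?_ ?_ ?_ ?_ <;>
    intro k hk <;> simp only [Finset.mem_Icc, Finset.mem_range] at hk ⊢
  · omega
  · omega
  · omega
  · omega
  · rw [show m + 1 - k - 1 = m - k by omega, show m + 1 - k = m - k + 1 by omega]

/-- The explicit part of the L1 scheme, a convex combination of `v 0, …, v (n - 1)`. -/
def l1History (α : ℝ) (v : ℕ → ℝ) (n : ℕ) : ℝ :=
  bcoef α (n - 1) * v 0 +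
    ∑ k ∈ Finset.Icc 1 (n - 1), (bcoef α (n - k - 1) - bcoef α (n - k)) * v k

lemma capD_eq_mul_sub_l1History (α τ : ℝ) (v : ℕ → ℝ) (n : ℕ) :
    capD α τ v n = τ ^ (-α) / Real.Gamma (2 - α) * (v n - l1History α v n) := by
  rw [capD, l1History, sub_add_eq_sub_sub]

lemma capD_sub (α τ : ℝ) (v w : ℕ → ℝ) (n : ℕ) :
    capD α τ (fun m => v m - w m) n = capD α τ v n - capD α τ w n := by
  simp only [capD, mul_sub, Finset.sum_sub_distrib]
  ring

lemma abs_l1History_le {α : ℝ} (hα : α ∈ Ioo (0 : ℝ) 1) {v : ℕ → ℝ} {n : ℕ} {M : ℝ}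
    (hn : 1 ≤ n) (hv : ∀ k < n, |v k| ≤ M) : |l1History α v n| ≤ M := by
  obtain ⟨m, rfl⟩ : ∃ m, n = m + 1 := ⟨n - 1, by omega⟩
  have hweight : ∀ k ∈ Finset.Icc 1 m, 0 ≤ bcoef α (m + 1 - k - 1) - bcoef α (m + 1 - k) :=
    fun k _ => sub_nonneg.mpr (bcoef_antitone hα (by omega))
  have hsum : |∑ k ∈ Finset.Icc 1 m, (bcoef α (m + 1 - k - 1) - bcoef α (m + 1 - k)) * v k|
      ≤ (bcoef α 0 - bcoef α m) * M := by
    rw [← sum_bcoef_sub_bcoef α m, Finset.sum_mul]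
    refine (Finset.abs_sum_le_sum_abs _ _).trans (Finset.sum_le_sum fun k hk => ?_)
    rw [abs_mul, abs_of_nonneg (hweight k hk)]
    exact mul_le_mul_of_nonneg_left (hv k (by have := Finset.mem_Icc.mp hk; omega)) (hweight k hk)
  have hfirst : |bcoef α m * v 0| ≤ bcoef α m * M := by
    rw [abs_mul, abs_of_nonneg (bcoef_nonneg hα.2.le m)]
    exact mul_le_mul_of_nonneg_left (hv 0 (by omega)) (bcoef_nonneg hα.2.le m)
  calc |l1History α v (m + 1)|
      ≤ bcoef α m * M + (bcoef α 0 - bcoef α m) * M := by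
        simpa only [l1History, Nat.add_sub_cancel] using
          (abs_add_le _ _).trans (add_le_add hfirst hsum)
    _ = M := by rw [bcoef_zero hα.2]; ring

section Lh

variable {d : ℕ} {h : ℝ} {ω : (Fin d → ℤ) → ℝ}

lemma summable_mul_weight (hω0 : ∀ β, 0 ≤ ω β)
    (hωs : Summable fun β : {β : Fin d → ℤ // β ≠ 0} => ω β.1)
    {g : {β : Fin d → ℤ // β ≠ 0} → ℝ} {C : ℝ} (hg : ∀ β, |g β| ≤ C) :
    Summable fun β : {β : Fin d → ℤ // β ≠ 0} => g β * ω β.1 :=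
  (hωs.mul_left C).of_norm_bounded fun β => by
    rw [Real.norm_eq_abs, abs_mul, abs_of_nonneg (hω0 β.1)]
    exact mul_le_mul_of_nonneg_right (hg β) (hω0 β.1)

lemma summable_Lh (hω0 : ∀ β, 0 ≤ ω β)
    (hωs : Summable fun β : {β : Fin d → ℤ // β ≠ 0} => ω β.1)
    {ψ : EuclideanSpace ℝ (Fin d) → ℝ} {C : ℝ} (hψ : ∀ x, |ψ x| ≤ C)
    (x : EuclideanSpace ℝ (Fin d)) :
    Summable fun β : {β : Fin d → ℤ // β ≠ 0} =>
      (ψ (x + zvec d h β.1) + ψ (x - zvec d h β.1) - 2 * ψ x) * ω β.1 :=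
  summable_mul_weight hω0 hωs (C := 4 * C) fun β => by
    have h₁ := abs_le.mp (hψ (x + zvec d h β.1))
    have h₂ := abs_le.mp (hψ (x - zvec d h β.1))
    have h₃ := abs_le.mp (hψ x)
    rw [abs_le]
    constructor <;> linarith

lemma Lh_sub (hω0 : ∀ β, 0 ≤ ω β)
    (hωs : Summable fun β : {β : Fin d → ℤ // β ≠ 0} => ω β.1)
    {ψ φ : EuclideanSpace ℝ (Fin d) → ℝ} {Cψ Cφ : ℝ}
    (hψ : ∀ x, |ψ x| ≤ Cψ) (hφ : ∀ x, |φ x| ≤ Cφ) (x : EuclideanSpace ℝ (Fin d)) :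
    Lh d h ω (fun y => ψ y - φ y) x = Lh d h ω ψ x - Lh d h ω φ x := by
  rw [Lh, Lh, Lh, ← (summable_Lh hω0 hωs hψ x).tsum_sub (summable_Lh hω0 hωs hφ x)]
  exact tsum_congr fun β => by ring

lemma abs_Lh_add_le (hω0 : ∀ β, 0 ≤ ω β)
    (hωs : Summable fun β : {β : Fin d → ℤ // β ≠ 0} => ω β.1)
    {ψ : EuclideanSpace ℝ (Fin d) → ℝ} {S : ℝ} (hψ : ∀ x, |ψ x| ≤ S)
    (x : EuclideanSpace ℝ (Fin d)) :
    |Lh d h ω ψ x + 2 * (∑' β : {β : Fin d → ℤ // β ≠ 0}, ω β.1) * ψ x|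
      ≤ 2 * S * ∑' β : {β : Fin d → ℤ // β ≠ 0}, ω β.1 := by
  have hbound : ∀ β : {β : Fin d → ℤ // β ≠ 0},
      |ψ (x + zvec d h β.1) + ψ (x - zvec d h β.1)| ≤ 2 * S := fun β =>
    (abs_add_le _ _).trans (by linarith [hψ (x + zvec d h β.1), hψ (x - zvec d h β.1)])
  have hsplit : Lh d h ω ψ x + 2 * (∑' β : {β : Fin d → ℤ // β ≠ 0}, ω β.1) * ψ x
      = ∑' β : {β : Fin d → ℤ // β ≠ 0},
          (ψ (x + zvec d h β.1) + ψ (x - zvec d h β.1)) * ω β.1 := by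
    have hLh : Lh d h ω ψ x = (∑' β : {β : Fin d → ℤ // β ≠ 0},
          (ψ (x + zvec d h β.1) + ψ (x - zvec d h β.1)) * ω β.1)
        - ∑' β : {β : Fin d → ℤ // β ≠ 0}, 2 * ψ x * ω β.1 := by
      rw [Lh, ← (summable_mul_weight hω0 hωs hbound).tsum_sub (hωs.mul_left _)]
      exact tsum_congr fun β => by ring
    rw [hLh, tsum_mul_left]
    ring
  rw [hsplit, ← Real.norm_eq_abs, ← tsum_mul_left]
  refine tsum_of_norm_bounded (hωs.mul_left _).hasSum fun β => ?_
  rw [Real.norm_eq_abs, abs_mul, abs_of_nonneg (hω0 β.1)]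
  exact mul_le_mul_of_nonneg_right (hbound β) (hω0 β.1)

end Lh

/-- Here `p` is the history and `L + 2 Ω a` an `ω`-weighted sum of values bounded by `S`;
passing from `D` to its bound `Dm` makes the estimate uniform in space. -/
lemma mul_abs_le_of_implicit_step {c D Dm Ω S M a p L : ℝ} (hc : 0 ≤ c) (hD : 0 ≤ D)
    (hDm : D ≤ Dm) (hΩ : 0 ≤ Ω) (ha : |a| ≤ S) (hp : |p| ≤ M)
    (hL : |L + 2 * Ω * a| ≤ 2 * S * Ω) (heq : c * (a - p) = D * L) :
    (c + 2 * Dm * Ω) * |a| ≤ c * M + 2 * Dm * Ω * S := by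
  have hsplit : (c + 2 * D * Ω) * a = c * p + D * (L + 2 * Ω * a) := by linear_combination heq
  have hD_step : (c + 2 * D * Ω) * |a| ≤ c * M + 2 * D * Ω * S := by
    calc (c + 2 * D * Ω) * |a| = |c * p + D * (L + 2 * Ω * a)| := by
          rw [← hsplit, abs_mul, abs_of_nonneg (show 0 ≤ c + 2 * D * Ω by positivity)]
      _ ≤ c * M + D * (2 * S * Ω) := by
          refine (abs_add_le _ _).trans (add_le_add ?_ ?_) <;>
            rw [abs_mul, abs_of_nonneg (by assumption)] <;> gcongr
      _ = c * M + 2 * D * Ω * S := by ring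
  nlinarith [mul_nonneg (mul_nonneg (sub_nonneg.mpr hDm) hΩ) (sub_nonneg.mpr ha)]

lemma forall_le_of_forall_add_mul_le {ι : Type*} [Nonempty ι] {f : ι → ℝ}
    (hf : BddAbove (range f)) {c K M : ℝ} (hc : 0 < c) (hK : 0 ≤ K)
    (h : ∀ i, (c + K) * f i ≤ c * M + K * ⨆ j, f j) (i : ι) : f i ≤ M := by
  have hsup : (⨆ j, f j) ≤ (c * M + K * ⨆ j, f j) / (c + K) :=
    ciSup_le fun j => (le_div_iff₀ (by linarith)).mpr (by linarith [h j])
  rw [le_div_iff₀ (by linarith)] at hsup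
  nlinarith [le_ciSup hf i]

section Scheme

variable {d : ℕ} {h τ α T : ℝ} {ω : (Fin d → ℤ) → ℝ}
  {D : EuclideanSpace ℝ (Fin d) → ℝ → ℝ}

lemma SchemeSol.sub {U V : ℕ → EuclideanSpace ℝ (Fin d) → ℝ}
    (hω0 : ∀ β, 0 ≤ ω β) (hωs : Summable fun β : {β : Fin d → ℤ // β ≠ 0} => ω β.1)
    (hU : SchemeSol d h τ α T ω D U) (hV : SchemeSol d h τ α T ω D V) :
    SchemeSol d h τ α T ω D fun n x => U n x - V n x := by
  refine ⟨fun n hn => ?_, fun n hn1 hn x => ?_⟩ <;>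
    obtain ⟨MU, hMU⟩ := hU.1 n hn <;> obtain ⟨MV, hMV⟩ := hV.1 n hn
  · exact ⟨MU + MV, fun x => (abs_sub _ _).trans (add_le_add (hMU x) (hMV x))⟩
  · rw [capD_sub, hU.2 n hn1 hn x, hV.2 n hn1 hn x, Lh_sub hω0 hωs hMU hMV, mul_sub]

lemma SchemeSol.abs_le_of_forall_lt_abs_le {W : ℕ → EuclideanSpace ℝ (Fin d) → ℝ}
    (hW : SchemeSol d h τ α T ω D W) (hα : α ∈ Ioo (0 : ℝ) 1) (hτ : 0 < τ)
    (hω0 : ∀ β, 0 ≤ ω β) (hωs : Summable fun β : {β : Fin d → ℤ // β ≠ 0} => ω β.1)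
    (hDbdd : ∃ M : ℝ, ∀ x t, t ∈ Icc (0 : ℝ) T → |D x t| ≤ M)
    (hDpos : ∀ x t, t ∈ Icc (0 : ℝ) T → 0 ≤ D x t)
    {n : ℕ} (hn1 : 1 ≤ n) (hnT : (n : ℝ) * τ ≤ T) {M : ℝ}
    (hprev : ∀ k < n, ∀ x, |W k x| ≤ M) (x : EuclideanSpace ℝ (Fin d)) :
    |W n x| ≤ M := by
  have htn : (n : ℝ) * τ ∈ Icc (0 : ℝ) T := ⟨by positivity, hnT⟩
  obtain ⟨Dm, hDm⟩ := hDbdd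
  have hDm0 : 0 ≤ Dm := (abs_nonneg _).trans (hDm x _ htn)
  obtain ⟨C, hC⟩ := hW.1 n hnT
  set c := τ ^ (-α) / Real.Gamma (2 - α)
  have hc : 0 < c :=
    div_pos (Real.rpow_pos_of_pos hτ _) (Real.Gamma_pos_of_pos (by linarith [hα.2]))
  set Ω := ∑' β : {β : Fin d → ℤ // β ≠ 0}, ω β.1
  have hΩ : 0 ≤ Ω := tsum_nonneg fun β => hω0 β.1
  have hbdd : BddAbove (range fun y => |W n y|) := ⟨C, forall_mem_range.mpr hC⟩
  have hS : ∀ y, |W n y| ≤ ⨆ z, |W n z| := fun y => le_ciSup hbdd y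
  refine forall_le_of_forall_add_mul_le (K := 2 * Dm * Ω) hbdd hc (by positivity) (fun y => ?_) x
  have heq := hW.2 n hn1 hnT y
  rw [capD_eq_mul_sub_l1History] at heq
  exact mul_abs_le_of_implicit_step hc.le (hDpos y _ htn) ((le_abs_self _).trans (hDm y _ htn))
    hΩ (hS y) (abs_l1History_le hα hn1 fun k hk => hprev k hk y)
    (abs_Lh_add_le hω0 hωs hS y) heq

theorem SchemeSol.abs_le_of_abs_zero_le {W : ℕ → EuclideanSpace ℝ (Fin d) → ℝ}
    (hW : SchemeSol d h τ α T ω D W) (hα : α ∈ Ioo (0 : ℝ) 1) (hτ : 0 < τ)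
    (hω0 : ∀ β, 0 ≤ ω β) (hωs : Summable fun β : {β : Fin d → ℤ // β ≠ 0} => ω β.1)
    (hDbdd : ∃ M : ℝ, ∀ x t, t ∈ Icc (0 : ℝ) T → |D x t| ≤ M)
    (hDpos : ∀ x t, t ∈ Icc (0 : ℝ) T → 0 ≤ D x t) {M : ℝ} (hM : ∀ x, |W 0 x| ≤ M) :
    ∀ n : ℕ, (n : ℝ) * τ ≤ T → ∀ x, |W n x| ≤ M := by
  intro n
  induction n using Nat.strong_induction_on with
  | _ n ih =>
    intro hnT
    rcases Nat.eq_zero_or_pos n with rfl | hn1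
    · exact hM
    refine hW.abs_le_of_forall_lt_abs_le hα hτ hω0 hωs hDbdd hDpos hn1 hnT fun k hk => ih k hk ?_
    exact le_trans (by gcongr) hnT

end Scheme

theorem scheme_linfty_contraction_general
    (d : ℕ) (h τ α T : ℝ) (ω : (Fin d → ℤ) → ℝ)
    (D : EuclideanSpace ℝ (Fin d) → ℝ → ℝ)
    (U V : ℕ → EuclideanSpace ℝ (Fin d) → ℝ)
    (hα : α ∈ Set.Ioo (0:ℝ) 1) (hτ : 0 < τ)
    (hA1 : A1 d ω)
    (hDbdd : ∃ M : ℝ, ∀ x t, t ∈ Set.Icc (0:ℝ) T → |D x t| ≤ M)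
    (hDpos : ∀ x t, t ∈ Set.Icc (0:ℝ) T → 0 ≤ D x t)
    (hU : SchemeSol d h τ α T ω D U) (hV : SchemeSol d h τ α T ω D V) :
    ∀ n : ℕ, (n : ℝ) * τ ≤ T →
      ∀ M : ℝ, (∀ x, |U 0 x - V 0 x| ≤ M) → ∀ x, |U n x - V n x| ≤ M := by
  obtain ⟨-, hω0, hωs⟩ := hA1
  intro n hnT M hM
  exact (hU.sub hω0 hωs hV).abs_le_of_abs_zero_le hα hτ hω0 hωs hDbdd hDpos hM n hnT

/-- L∞-contraction of the scheme (S). -/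
theorem scheme_linfty_contraction
    (d : ℕ) (h τ α T : ℝ) (ω : (Fin d → ℤ) → ℝ)
    (D : EuclideanSpace ℝ (Fin d) → ℝ → ℝ)
    (U V : ℕ → EuclideanSpace ℝ (Fin d) → ℝ)
    (hα : α ∈ Set.Ioo (0:ℝ) 1) (hh : 0 < h) (hτ : 0 < τ) (hT : 0 < T)
    (hA1 : A1 d ω)
    (hDbdd : ∃ M : ℝ, ∀ x t, t ∈ Set.Icc (0:ℝ) T → |D x t| ≤ M)
    (hDpos : ∀ x t, t ∈ Set.Icc (0:ℝ) T → 0 ≤ D x t)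
    (hU : SchemeSol d h τ α T ω D U) (hV : SchemeSol d h τ α T ω D V) :
    ∀ n : ℕ, (n : ℝ) * τ ≤ T →
      ∀ M : ℝ, (∀ x, |U 0 x - V 0 x| ≤ M) → ∀ x, |U n x - V n x| ≤ M :=
  scheme_linfty_contraction_general d h τ α T ω D U V hα hτ hA1 hDbdd hDpos hU hV

end
end

section
/- Let α ∈ (0,1), τ > 0 and let (f^n)_{n≥0} be any real sequence; write δ₁f^n := f^{n+1} − f^n. Then for every n ≥ 1 one has ∂_τ^α f^{n+1} − ∂_τ^α f^n = ^{RL}∂_τ^α (δ₁f)^n, i.e. the forward difference of the L1 discrete Caputo derivative equals the L1 discrete Riemann–Liouville derivative of the forward-differenced sequence. -/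
/-!
Writing `w j := b_{j-1} - b_j`, both derivatives are built from the discrete convolution
`∑_{k<n} w (n-k) f^k`. Since `b_{n-1} = w n + b_n`, the Caputo derivative is the
Riemann–Liouville derivative minus the boundary term `b_n f^0`; and shifting the index of the
convolution against `δ₁f` produces `∑_{k<n+1} w (n+1-k) f^k - ∑_{k<n} w (n-k) f^k` up to a
boundary term `w (n+1) f^0`. The two boundary terms cancel.
-/

open MeasureTheory Real Filter Set

noncomputable section

open Finset

lemma sum_range_succ_mul_sub_index (w f : ℕ → ℝ) (n : ℕ) :
    ∑ k ∈ range (n + 1), w (n + 1 - k) * f k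
      = ∑ k ∈ range n, w (n - k) * f (k + 1) + w (n + 1) * f 0 := by
  rw [sum_range_succ']
  simp only [Nat.add_sub_add_right, Nat.sub_zero]

lemma capD_eq_rlD_sub (α τ : ℝ) (v : ℕ → ℝ) {n : ℕ} (hn : 1 ≤ n) :
    capD α τ v n = rlD α τ v n - τ ^ (-α) / Real.Gamma (2 - α) * bcoef α n * v 0 := by
  obtain ⟨m, rfl⟩ : ∃ m, n = m + 1 := ⟨n - 1, by omega⟩
  have hsplit : ∑ k ∈ range (m + 1), (bcoef α (m + 1 - k - 1) - bcoef α (m + 1 - k)) * v k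
      = (bcoef α m - bcoef α (m + 1)) * v 0
        + ∑ k ∈ Icc 1 m, (bcoef α (m + 1 - k - 1) - bcoef α (m + 1 - k)) * v k := by
    rw [range_eq_Ico, sum_eq_sum_Ico_succ_bot (Nat.succ_pos m),
      ← Finset.Ico_add_one_right_eq_Icc]
    rfl
  simp only [capD, rlD, Nat.add_sub_cancel, hsplit]
  ring

lemma rlD_forward_diff_eq (α τ : ℝ) (f : ℕ → ℝ) (n : ℕ) :
    rlD α τ (fun k => f (k + 1) - f k) n
      = rlD α τ f (n + 1) - rlD α τ f n
        + τ ^ (-α) / Real.Gamma (2 - α) * (bcoef α n - bcoef α (n + 1)) * f 0 := by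
  have hshift := sum_range_succ_mul_sub_index (fun j => bcoef α (j - 1) - bcoef α j) f n
  simp only [Nat.add_sub_cancel] at hshift
  simp only [rlD, mul_sub, sum_sub_distrib, hshift]
  ring

theorem caputo_diff_eq_rl_of_diff_general
    (α τ : ℝ)
    (f : ℕ → ℝ) (n : ℕ) (hn : 1 ≤ n) :
    capD α τ f (n + 1) - capD α τ f n
      = rlD α τ (fun k => f (k + 1) - f k) n := by
  rw [capD_eq_rlD_sub α τ f (Nat.le_add_left 1 n), capD_eq_rlD_sub α τ f hn, rlD_forward_diff_eq]
  ring

/-- the forward difference of the L1 discrete Caputo derivative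
equals the L1 discrete Riemann–Liouville derivative of the forward difference. -/
theorem caputo_diff_eq_rl_of_diff
    (α τ : ℝ) (hα : α ∈ Set.Ioo (0:ℝ) 1) (hτ : 0 < τ)
    (f : ℕ → ℝ) (n : ℕ) (hn : 1 ≤ n) :
    capD α τ f (n + 1) - capD α τ f n
      = rlD α τ (fun k => f (k + 1) - f k) n :=
  caputo_diff_eq_rl_of_diff_general α τ f n hn

end
end

section
/- Let α ∈ (0,1), τ > 0, T > 0, C̃ > 0, and let y : [0,T] → ℝ be continuous with |y(t) − y(s)| ≤ C̃ (1 + max{t,s}^{α−1}) |t − s| for all s, t ∈ [0,T]. Let I_τ[y] be the piecewise linear interpolant of y with nodes t_k = kτ. Then for every k ≥ 0 and every s ∈ (t_k, t_{k+1}) with t_{k+1} ≤ T: |I_τ[y](s) − y(s)| ≤ 2 C̃ ((s − t_k)(t_{k+1} − s)/τ) (1 + s^{α−1}). -/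
open MeasureTheory Real Filter Set

noncomputable section

theorem abs_lineInterp_sub_le {f : ℝ → ℝ} {a b s L : ℝ} (has : a ≤ s) (hsb : s ≤ b)
    (hab : a < b) (hfa : |f a - f s| ≤ L * |a - s|) (hfb : |f b - f s| ≤ L * |b - s|) :
    |(s - a) / (b - a) * f b + (b - s) / (b - a) * f a - f s|
      ≤ 2 * L * ((s - a) * (b - s) / (b - a)) := by
  have hba : 0 < b - a := sub_pos.mpr hab
  rw [abs_of_nonpos (by linarith : a - s ≤ 0)] at hfa
  rw [abs_of_nonneg (by linarith : 0 ≤ b - s)] at hfb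
  have hsplit : (s - a) / (b - a) * f b + (b - s) / (b - a) * f a - f s
      = ((s - a) * (f b - f s) + (b - s) * (f a - f s)) / (b - a) := by
    field_simp
    ring
  rw [hsplit, abs_div, abs_of_pos hba, div_le_iff₀ hba]
  calc |(s - a) * (f b - f s) + (b - s) * (f a - f s)|
      ≤ (s - a) * |f b - f s| + (b - s) * |f a - f s| := by
        refine (abs_add_le _ _).trans_eq ?_
        rw [abs_mul, abs_mul, abs_of_nonneg (sub_nonneg.mpr has),
          abs_of_nonneg (sub_nonneg.mpr hsb)]
    _ ≤ (s - a) * (L * (b - s)) + (b - s) * (L * -(a - s)) := by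
        gcongr
    _ = 2 * L * ((s - a) * (b - s) / (b - a)) * (b - a) := by
        field_simp
        ring

theorem piecewise_linear_interpolation_error_general
    (α τ T Ctil : ℝ) (y : ℝ → ℝ)
    (hα : α ∈ Set.Ioo (0:ℝ) 1) (hτ : 0 < τ) (hCtil : 0 < Ctil)
    (hmod : ∀ t ∈ Set.Icc (0:ℝ) T, ∀ s ∈ Set.Icc (0:ℝ) T,
      |y t - y s| ≤ Ctil * (1 + max t s ^ (α - 1)) * |t - s|) :
    ∀ (k : ℕ) (s : ℝ), s ∈ Set.Ioo ((k : ℝ) * τ) (((k : ℝ) + 1) * τ) →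
      ((k : ℝ) + 1) * τ ≤ T →
      |((s - (k : ℝ) * τ) / τ) * y (((k : ℝ) + 1) * τ)
          + ((((k : ℝ) + 1) * τ - s) / τ) * y ((k : ℝ) * τ) - y s|
        ≤ 2 * Ctil * ((s - (k : ℝ) * τ) * (((k : ℝ) + 1) * τ - s) / τ)
            * (1 + s ^ (α - 1)) := by
  rintro k s ⟨hks, hsk⟩ hkT
  have hk : (0 : ℝ) ≤ k * τ := by positivity
  have hs : 0 < s := hk.trans_lt hks
  have hsT : s ∈ Set.Icc (0 : ℝ) T := ⟨hs.le, hsk.le.trans hkT⟩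
  have hmod_s : ∀ t ∈ Set.Icc (0 : ℝ) T,
      |y t - y s| ≤ Ctil * (1 + s ^ (α - 1)) * |t - s| := fun t ht ↦
    (hmod t ht s hsT).trans (by
      gcongr Ctil * (1 + ?_) * _
      exact Real.rpow_le_rpow_of_nonpos hs (le_max_right t s) (by linarith [hα.2]))
  have hstep : ((k : ℝ) + 1) * τ - k * τ = τ := by ring
  have hinterp := abs_lineInterp_sub_le hks.le hsk.le (hks.trans hsk)
    (hmod_s _ ⟨hk, hks.le.trans (hsk.le.trans hkT)⟩) (hmod_s _ ⟨hs.le.trans hsk.le, hkT⟩)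
  rw [hstep] at hinterp
  linarith

/-- pointwise error of piecewise linear interpolation for
functions with the natural blow-up rate of the time modulus. -/
theorem piecewise_linear_interpolation_error
    (α τ T Ctil : ℝ) (y : ℝ → ℝ)
    (hα : α ∈ Set.Ioo (0:ℝ) 1) (hτ : 0 < τ) (hT : 0 < T) (hCtil : 0 < Ctil)
    (hy : ContinuousOn y (Set.Icc 0 T))
    (hmod : ∀ t ∈ Set.Icc (0:ℝ) T, ∀ s ∈ Set.Icc (0:ℝ) T,
      |y t - y s| ≤ Ctil * (1 + max t s ^ (α - 1)) * |t - s|) :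
    ∀ (k : ℕ) (s : ℝ), s ∈ Set.Ioo ((k : ℝ) * τ) (((k : ℝ) + 1) * τ) →
      ((k : ℝ) + 1) * τ ≤ T →
      |((s - (k : ℝ) * τ) / τ) * y (((k : ℝ) + 1) * τ)
          + ((((k : ℝ) + 1) * τ - s) / τ) * y ((k : ℝ) * τ) - y s|
        ≤ 2 * Ctil * ((s - (k : ℝ) * τ) * (((k : ℝ) + 1) * τ - s) / τ)
            * (1 + s ^ (α - 1)) :=
  piecewise_linear_interpolation_error_general α τ T Ctil y hα hτ hCtil hmod

end
end

section
/- Let α ∈ (0,1), τ ∈ (0,1), K > 0, N ∈ ℕ, and let R^1, …, R^N be nonnegative numbers with R^1 ≤ K and R^k ≤ K t_{k−1}^{α−1} τ^{1−α} for 2 ≤ k ≤ N, where t_j := jτ. Then there exists a constant C > 0 depending only on α and K such that (τ^α/Γ(α)) Σ_{k=0}^{n−1} (n−k)^{α−1} R^{k+1} ≤ C t_n^{2α−1} τ^{1−α} for all 1 ≤ n ≤ N. -/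
open MeasureTheory Real Filter Set

noncomputable section

open Finset

/-!
Once `τ` is factored out, the hypothesis reads `R (k + 1) ≤ K k^(α-1)` and the claim becomes the
discrete Beta-integral bound `∑_{k=1}^{n-1} (n-k)^(α-1) k^(α-1) ≲ n^(2α-1)`. In each product one
factor has base at least `n / 2`, so the product is at most
`2^(1-α) n^(α-1) (k^(α-1) + (n-k)^(α-1))`, and `∑_{k ≤ n} k^(α-1) ≤ n^α / α` by concavity of `x ↦ x^α`.
-/

/-- Tangent line at `y` of the concave `x ↦ x ^ p`, via Bernoulli's inequality. -/
lemma mul_rpow_sub_one_mul_sub_le_rpow_sub_rpow {p x y : ℝ} (hp0 : 0 ≤ p) (hp1 : p ≤ 1)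
    (hx : 0 ≤ x) (hy : 0 < y) :
    p * y ^ (p - 1) * (y - x) ≤ y ^ p - x ^ p := by
  have hs : -1 ≤ x / y - 1 := by linarith [div_nonneg hx hy.le]
  have hbern := rpow_one_add_le_one_add_mul_self hs hp0 hp1
  rw [add_sub_cancel, div_rpow hx hy.le, div_le_iff₀ (rpow_pos_of_pos hy p)] at hbern
  have hy' : y ^ (p - 1) * y = y ^ p := by rw [rpow_sub_one hy.ne', div_mul_cancel₀ _ hy.ne']
  have hexp : (1 + p * (x / y - 1)) * y ^ p = y ^ p - p * y ^ (p - 1) * (y - x) := by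
    rw [← hy']; field_simp; ring
  linarith

lemma sum_range_add_one_rpow_sub_one_le {p : ℝ} (hp0 : 0 < p) (hp1 : p ≤ 1) (n : ℕ) :
    ∑ i ∈ range n, ((i : ℝ) + 1) ^ (p - 1) ≤ (n : ℝ) ^ p / p := by
  induction n with
  | zero => simp [zero_rpow hp0.ne']
  | succ n ih =>
    have htangent := mul_rpow_sub_one_mul_sub_le_rpow_sub_rpow hp0.le hp1
      (Nat.cast_nonneg n) (by positivity : (0 : ℝ) < n + 1)
    rw [sum_range_succ, Nat.cast_succ, le_div_iff₀ hp0]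
    rw [le_div_iff₀ hp0] at ih
    nlinarith

/-- The larger of `a, b` is at least `(a + b) / 2`, and `x ↦ x ^ (p - 1)` is antitone. -/
lemma mul_rpow_sub_one_le {p a b : ℝ} (hp : p ≤ 1) (ha : 0 < a) (hb : 0 < b) :
    a ^ (p - 1) * b ^ (p - 1) ≤ 2 ^ (1 - p) * (a + b) ^ (p - 1) * (a ^ (p - 1) + b ^ (p - 1)) := by
  wlog hab : a ≤ b generalizing a b
  · have := this hb ha (le_of_not_ge hab)
    rw [add_comm b, add_comm (b ^ (p - 1))] at this
    linarith
  have hmax : b ^ (p - 1) ≤ 2 ^ (1 - p) * (a + b) ^ (p - 1) :=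
    calc b ^ (p - 1) ≤ ((a + b) / 2) ^ (p - 1) :=
          rpow_le_rpow_of_nonpos (by positivity) (by linarith) (by linarith)
      _ = 2 ^ (1 - p) * (a + b) ^ (p - 1) := by
          rw [div_rpow (by positivity) zero_le_two, div_eq_mul_inv, ← rpow_neg zero_le_two,
            neg_sub, mul_comm]
  have ha' := rpow_pos_of_pos ha (p - 1)
  have hb' := rpow_pos_of_pos hb (p - 1)
  nlinarith

/-- Discrete analogue of `∫₀ⁿ s^(p-1) (n-s)^(p-1) ds = B(p,p) n^(2p-1)`. -/
lemma sum_range_rpow_sub_one_mul_rpow_sub_one_le {p : ℝ} (hp0 : 0 < p) (hp1 : p ≤ 1) (m : ℕ) :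
    ∑ i ∈ range m, ((m - i : ℕ) : ℝ) ^ (p - 1) * ((i : ℝ) + 1) ^ (p - 1)
      ≤ 2 ^ (2 - p) / p * ((m : ℝ) + 1) ^ (2 * p - 1) := by
  set n : ℝ := (m : ℝ) + 1
  have hn : 0 < n := by positivity
  have hreflect : ∑ i ∈ range m, ((m - i : ℕ) : ℝ) ^ (p - 1)
      = ∑ i ∈ range m, ((i : ℝ) + 1) ^ (p - 1) := by
    rw [← sum_range_reflect]
    refine sum_congr rfl fun i hi => ?_
    have hi : m - (m - 1 - i) = i + 1 := by have := mem_range.mp hi; omega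
    rw [hi, Nat.cast_succ]
  have hhalf : ∑ i ∈ range m, ((i : ℝ) + 1) ^ (p - 1) ≤ n ^ p / p :=
    (sum_range_add_one_rpow_sub_one_le hp0 hp1 m).trans <| by
      gcongr; exact le_add_of_nonneg_right zero_le_one
  calc ∑ i ∈ range m, ((m - i : ℕ) : ℝ) ^ (p - 1) * ((i : ℝ) + 1) ^ (p - 1)
      ≤ ∑ i ∈ range m, 2 ^ (1 - p) * n ^ (p - 1) *
          (((m - i : ℕ) : ℝ) ^ (p - 1) + ((i : ℝ) + 1) ^ (p - 1)) := by
        refine sum_le_sum fun i hi => ?_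
        have hsum : ((m - i : ℕ) : ℝ) + ((i : ℝ) + 1) = n := by
          rw [Nat.cast_sub (mem_range.mp hi).le]; ring
        rw [← hsum]
        exact mul_rpow_sub_one_le hp1 (by simpa using hi) (by positivity)
    _ = 2 ^ (1 - p) * n ^ (p - 1) * (2 * ∑ i ∈ range m, ((i : ℝ) + 1) ^ (p - 1)) := by
        rw [← mul_sum, sum_add_distrib, hreflect, two_mul]
    _ ≤ 2 ^ (1 - p) * n ^ (p - 1) * (2 * (n ^ p / p)) := by gcongr
    _ = 2 ^ (2 - p) / p * n ^ (2 * p - 1) := by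
        rw [show (2 : ℝ) - p = 1 - p + 1 by ring, rpow_add_one two_ne_zero,
          show 2 * p - 1 = p - 1 + p by ring, rpow_add hn]
        ring

lemma mul_rpow_mul_rpow {x τ : ℝ} (hx : 0 ≤ x) (hτ : 0 < τ) (a b : ℝ) :
    (x * τ) ^ a * τ ^ b = x ^ a * τ ^ (a + b) := by
  rw [mul_rpow hx hτ.le, mul_assoc, rpow_add hτ]

lemma sum_range_rpow_sub_one_mul_le {α K : ℝ} (hα0 : 0 < α) (hα1 : α ≤ 1) (hK : 0 ≤ K)
    {R : ℕ → ℝ} {n : ℕ} (hn : 1 ≤ n) (hR1 : R 1 ≤ K)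
    (hR : ∀ k : ℕ, 1 ≤ k → k < n → R (k + 1) ≤ K * (k : ℝ) ^ (α - 1)) :
    ∑ k ∈ range n, ((n - k : ℕ) : ℝ) ^ (α - 1) * R (k + 1)
      ≤ K * (1 + 2 ^ (2 - α) / α) * (n : ℝ) ^ (2 * α - 1) := by
  obtain ⟨m, rfl⟩ := Nat.exists_eq_add_of_le' hn
  have hhead : ((m + 1 - 0 : ℕ) : ℝ) ^ (α - 1) * R (0 + 1) ≤ K * ((m : ℝ) + 1) ^ (2 * α - 1) :=
    calc ((m + 1 - 0 : ℕ) : ℝ) ^ (α - 1) * R (0 + 1) ≤ ((m : ℝ) + 1) ^ (α - 1) * K := by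
          push_cast; gcongr
      _ ≤ ((m : ℝ) + 1) ^ (2 * α - 1) * K :=
          mul_le_mul_of_nonneg_right (rpow_le_rpow_of_exponent_le (by simp) (by linarith)) hK
      _ = K * ((m : ℝ) + 1) ^ (2 * α - 1) := mul_comm _ _
  have htail : ∑ i ∈ range m, ((m + 1 - (i + 1) : ℕ) : ℝ) ^ (α - 1) * R (i + 1 + 1)
      ≤ K * (2 ^ (2 - α) / α) * ((m : ℝ) + 1) ^ (2 * α - 1) :=
    calc ∑ i ∈ range m, ((m + 1 - (i + 1) : ℕ) : ℝ) ^ (α - 1) * R (i + 1 + 1)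
        ≤ ∑ i ∈ range m, ((m - i : ℕ) : ℝ) ^ (α - 1) * (K * ((i : ℝ) + 1) ^ (α - 1)) := by
          refine sum_le_sum fun i hi => ?_
          rw [Nat.add_sub_add_right]
          gcongr
          exact_mod_cast hR (i + 1) (by omega) (by simpa using hi)
      _ = K * ∑ i ∈ range m, ((m - i : ℕ) : ℝ) ^ (α - 1) * ((i : ℝ) + 1) ^ (α - 1) := by
          rw [mul_sum]; exact sum_congr rfl fun _ _ => by ring
      _ ≤ K * (2 ^ (2 - α) / α) * ((m : ℝ) + 1) ^ (2 * α - 1) := by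
          rw [mul_assoc]
          gcongr
          exact sum_range_rpow_sub_one_mul_rpow_sub_one_le hα0 hα1 m
  rw [sum_range_succ', Nat.cast_succ]
  linarith

/-- discrete fractional integral bound of the L1 truncation errors. -/
theorem discrete_fractional_integral_of_truncation
    (α K : ℝ) (hα : α ∈ Set.Ioo (0:ℝ) 1) (hK : 0 < K) :
    ∃ C : ℝ, 0 < C ∧
      ∀ (τ : ℝ) (N : ℕ) (R : ℕ → ℝ),
        τ ∈ Set.Ioo (0:ℝ) 1 →
        (∀ k : ℕ, 1 ≤ k → k ≤ N → 0 ≤ R k) →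
        R 1 ≤ K →
        (∀ k : ℕ, 2 ≤ k → k ≤ N →
          R k ≤ K * (((k : ℝ) - 1) * τ) ^ (α - 1) * τ ^ (1 - α)) →
        ∀ n : ℕ, 1 ≤ n → n ≤ N →
          (τ ^ α / Real.Gamma α) *
              ∑ k ∈ Finset.range n, ((n - k : ℕ) : ℝ) ^ (α - 1) * R (k + 1)
            ≤ C * ((n : ℝ) * τ) ^ (2 * α - 1) * τ ^ (1 - α) := by
  obtain ⟨hα0, hα1⟩ := hα
  have hΓ : 0 < Gamma α := Gamma_pos_of_pos hα0
  refine ⟨K * (1 + 2 ^ (2 - α) / α) / Gamma α, by positivity, ?_⟩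
  rintro τ N R ⟨hτ0, -⟩ - hR1 hRk n hn hnN
  have hR : ∀ k : ℕ, 1 ≤ k → k < n → R (k + 1) ≤ K * (k : ℝ) ^ (α - 1) := by
    intro k hk hkn
    have h := hRk (k + 1) (by omega) (by omega)
    rwa [Nat.cast_succ, add_sub_cancel_right, mul_assoc,
      mul_rpow_mul_rpow (Nat.cast_nonneg k) hτ0,
      show α - 1 + (1 - α) = 0 by ring, rpow_zero, mul_one] at h
  calc τ ^ α / Gamma α * ∑ k ∈ range n, ((n - k : ℕ) : ℝ) ^ (α - 1) * R (k + 1)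
      ≤ τ ^ α / Gamma α * (K * (1 + 2 ^ (2 - α) / α) * (n : ℝ) ^ (2 * α - 1)) := by
        gcongr
        exact sum_range_rpow_sub_one_mul_le hα0 hα1.le hK.le hn hR1 hR
    _ = K * (1 + 2 ^ (2 - α) / α) / Gamma α * ((n : ℝ) * τ) ^ (2 * α - 1) * τ ^ (1 - α) := by
        rw [mul_assoc _ (((n : ℝ) * τ) ^ _), mul_rpow_mul_rpow (Nat.cast_nonneg n) hτ0,
          show 2 * α - 1 + (1 - α) = α by ring]
        ring

end
end

section
/- Let s ∈ (0,1) and set c_s := ( ∫_{ℝ∖{0}} (1 − cos z) |z|^{−1−2s} dz )^{−1}; this integral is finite and strictly positive. Then for every x ∈ ℝ, the principal value integral converges and lim_{ε→0⁺} c_s ∫_{{y ∈ ℝ : |x−y| > ε}} (sin x − sin y)/|x−y|^{1+2s} dy = sin x. In other words, sin is an eigenfunction of the one-dimensional fractional Laplacian (−Δ)^s with eigenvalue 1. -/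
open MeasureTheory Real Filter Set

noncomputable section

/-!
Substituting `y = x - z` and expanding `sin (x - z) = sin x cos z - cos x sin z` splits the
truncated integral into `sin x` times the truncated integral of the kernel
`(1 - cos z) |z|^{-1-2s}`, plus `cos x` times the integral of the odd function
`sin z / |z|^{1+2s}` over the symmetric set `|z| > ε`, which vanishes. The kernel is
`O(|z|^{1-2s})` near `0` and `O(|z|^{-1-2s})` at infinity, hence integrable, so the truncated
integrals converge to `c_s⁻¹` as `ε → 0`.
-/

open Metric Topology

section Decay

variable {E F : Type*} [NormedAddCommGroup E] [NormedSpace ℝ E] [FiniteDimensional ℝ E]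
  [MeasurableSpace E] [BorelSpace E] [NormedAddCommGroup F] {μ : Measure E} [μ.IsAddHaarMeasure]

theorem integrableOn_compl_closedBall_rpow_neg {r α : ℝ} (hr : 0 < r)
    (hα : Module.finrank ℝ E < α) :
    IntegrableOn (fun x : E ↦ ‖x‖ ^ (-α)) (closedBall 0 r)ᶜ μ := by
  have hα0 : 0 < α := lt_of_le_of_lt (Nat.cast_nonneg _) hα
  -- On `‖x‖ > r` the weight `‖x‖ ^ (-α)` is comparable to the integrable `(1 + ‖x‖) ^ (-α)`.
  refine ((integrable_one_add_norm hα).const_mul (((1 + r) / r) ^ α)).integrableOn.mono'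
    (measurable_norm.pow_const _).aestronglyMeasurable ?_
  refine ae_restrict_of_forall_mem measurableSet_closedBall.compl fun x hx ↦ ?_
  have hrx : r < ‖x‖ := by simpa using hx
  have hx0 : 0 < ‖x‖ := hr.trans hrx
  set K := (1 + r) / r
  have hK : 0 < K := by positivity
  have hcmp : 1 + ‖x‖ ≤ K * ‖x‖ := by
    rw [div_mul_eq_mul_div, le_div_iff₀ hr]; nlinarith
  rw [Real.norm_of_nonneg (by positivity)]
  calc ‖x‖ ^ (-α) = K ^ α * (K ^ (-α) * ‖x‖ ^ (-α)) := by
        rw [← mul_assoc, ← Real.rpow_add hK, add_neg_cancel, Real.rpow_zero, one_mul]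
    _ = K ^ α * (K * ‖x‖) ^ (-α) := by rw [Real.mul_rpow hK.le hx0.le]
    _ ≤ K ^ α * (1 + ‖x‖) ^ (-α) := by
        gcongr _ * ?_
        exact Real.rpow_le_rpow_of_nonpos (by positivity) hcmp (neg_nonpos.mpr hα0.le)

theorem integrableOn_compl_closedBall_of_norm_le_rpow {f : E → F} {C r α : ℝ} (hr : 0 < r)
    (hα : Module.finrank ℝ E < α)
    (h_decay : ∀ x, r < ‖x‖ → ‖f x‖ ≤ C * ‖x‖ ^ (-α)) (h_meas : AEStronglyMeasurable f μ) :
    IntegrableOn f (closedBall 0 r)ᶜ μ :=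
  ((integrableOn_compl_closedBall_rpow_neg hr hα).const_mul C).mono' h_meas.restrict <|
    ae_restrict_of_forall_mem measurableSet_closedBall.compl fun x hx ↦ h_decay x (by simpa using hx)

end Decay

section Odd

variable {G E : Type*} [MeasurableSpace G] [AddGroup G] [MeasurableNeg G] [NormedAddCommGroup E]
  [NormedSpace ℝ E] {μ : Measure G} [μ.IsNegInvariant] {f : G → E}

theorem integral_eq_zero_of_odd (hf : ∀ x, f (-x) = -f x) : ∫ x, f x ∂μ = 0 := by
  have h := integral_neg_eq_self f μ
  simp only [hf, integral_neg] at h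
  have h2 : (2 : ℝ) • ∫ x, f x ∂μ = 0 := by
    rw [two_smul]
    nth_rewrite 1 [← h]
    exact neg_add_cancel _
  exact (smul_eq_zero.mp h2).resolve_left two_ne_zero

theorem setIntegral_eq_zero_of_odd {s : Set G} (hs : MeasurableSet s) (hs_neg : -s = s)
    (hf : ∀ x, f (-x) = -f x) : ∫ x in s, f x ∂μ = 0 := by
  rw [← integral_indicator hs]
  refine integral_eq_zero_of_odd fun x ↦ ?_
  have hmem : -x ∈ s ↔ x ∈ s := by rw [← Set.mem_neg, hs_neg]
  by_cases hx : x ∈ s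
  · simp [indicator_of_mem hx, indicator_of_mem (hmem.mpr hx), hf]
  · simp [indicator_of_notMem hx, indicator_of_notMem (mt hmem.mp hx)]

end Odd

theorem tendsto_setIntegral_compl_closedBall {E : Type*} [NormedAddCommGroup E] [NormedSpace ℝ E]
    {f : ℝ → E} (hf : Integrable f) (a : ℝ) :
    Tendsto (fun ε ↦ ∫ x in (closedBall a ε)ᶜ, f x) (𝓝 0) (𝓝 (∫ x, f x)) := by
  have hball : Tendsto (fun ε ↦ ∫ x in closedBall a ε, f x) (𝓝 0) (𝓝 0) := by
    refine hf.tendsto_setIntegral_nhds_zero ?_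
    have h2ε : Tendsto (fun ε : ℝ ↦ ENNReal.ofReal (2 * ε)) (𝓝 0) (𝓝 (ENNReal.ofReal (2 * 0))) :=
      (ENNReal.continuous_ofReal.comp (continuous_const_mul 2)).tendsto 0
    simpa only [Function.comp_def, Real.volume_closedBall, mul_zero, ENNReal.ofReal_zero] using h2ε
  have hcompl : ∀ ε, ∫ x in (closedBall a ε)ᶜ, f x = (∫ x, f x) - ∫ x in closedBall a ε, f x :=
    fun ε ↦ eq_sub_of_add_eq' (integral_add_compl measurableSet_closedBall hf)
  simpa [hcompl] using tendsto_const_nhds.sub hball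

section Reflection

variable {E : Type*} [NormedAddCommGroup E] (x ε : ℝ) (f : ℝ → E)

theorem preimage_sub_left_compl_closedBall :
    (fun y ↦ x - y) ⁻¹' (closedBall 0 ε)ᶜ = {y : ℝ | ε < |x - y|} := by
  ext y
  simp

theorem integrableOn_comp_sub_left_lt_abs_sub_iff :
    IntegrableOn (fun y ↦ f (x - y)) {y : ℝ | ε < |x - y|} ↔ IntegrableOn f (closedBall 0 ε)ᶜ := by
  rw [← preimage_sub_left_compl_closedBall]
  exact (Measure.measurePreserving_sub_left volume x).integrableOn_comp_preimage
    (MeasurableEquiv.subLeft x).measurableEmbedding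

theorem setIntegral_comp_sub_left_lt_abs_sub [NormedSpace ℝ E] :
    ∫ y in {y : ℝ | ε < |x - y|}, f (x - y) = ∫ z in (closedBall 0 ε)ᶜ, f z := by
  rw [← preimage_sub_left_compl_closedBall]
  exact (Measure.measurePreserving_sub_left volume x).setIntegral_preimage_emb
    (MeasurableEquiv.subLeft x).measurableEmbedding f _

end Reflection

section Kernel

variable {p : ℝ}

theorem integrableOn_compl_closedBall_sin_div_abs_rpow (hp : 1 < p) {ε : ℝ} (hε : 0 < ε) :
    IntegrableOn (fun z : ℝ ↦ sin z / |z| ^ p) (closedBall 0 ε)ᶜ := by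
  refine integrableOn_compl_closedBall_of_norm_le_rpow (C := 1) hε (by simpa using hp)
    (fun z hz ↦ ?_)
    (continuous_sin.measurable.div (measurable_abs.pow_const p)).aestronglyMeasurable
  have hz0 : 0 < |z| := hε.trans (by simpa using hz)
  rw [Real.norm_eq_abs, Real.norm_eq_abs, one_mul, Real.rpow_neg hz0.le, abs_div,
    abs_of_pos (Real.rpow_pos_of_pos hz0 p), div_eq_mul_inv]
  exact mul_le_of_le_one_left (by positivity) (abs_sin_le_one z)

theorem integrable_one_sub_cos_mul_abs_rpow_neg (hp₁ : 1 < p) (hp₃ : p < 3) :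
    Integrable (fun z : ℝ ↦ (1 - cos z) * |z| ^ (-p)) := by
  have hmeas : AEStronglyMeasurable (fun z : ℝ ↦ (1 - cos z) * |z| ^ (-p)) :=
    ((continuous_const.sub continuous_cos).measurable.mul
      (measurable_abs.pow_const _)).aestronglyMeasurable
  have hnear : ∀ z : ℝ, ‖(1 - cos z) * |z| ^ (-p)‖ ≤ 2⁻¹ * ‖z‖ ^ (-(p - 2)) := by
    intro z
    rcases eq_or_ne z 0 with rfl | hz
    · simpa using Real.rpow_nonneg le_rfl _
    have hz0 : 0 < |z| := abs_pos.mpr hz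
    calc ‖(1 - cos z) * |z| ^ (-p)‖ = (1 - cos z) * |z| ^ (-p) :=
          Real.norm_of_nonneg (mul_nonneg (sub_nonneg.mpr (cos_le_one z)) (by positivity))
      _ ≤ z ^ 2 / 2 * |z| ^ (-p) := by gcongr; linarith [one_sub_sq_div_two_le_cos (x := z)]
      _ = 2⁻¹ * ‖z‖ ^ (-(p - 2)) := by
          rw [Real.norm_eq_abs, show -(p - 2) = 2 + -p by ring, Real.rpow_add hz0, Real.rpow_two,
            sq_abs]
          ring
  have hfar : ∀ z : ℝ, 1 < ‖z‖ → ‖(1 - cos z) * |z| ^ (-p)‖ ≤ 2 * ‖z‖ ^ (-p) := by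
    intro z _
    rw [Real.norm_eq_abs, Real.norm_eq_abs, abs_mul, abs_of_nonneg (sub_nonneg.mpr (cos_le_one z)),
      abs_of_nonneg (by positivity)]
    gcongr
    linarith [neg_one_le_cos z]
  have hball : IntegrableOn (fun z : ℝ ↦ (1 - cos z) * |z| ^ (-p)) (closedBall 0 1) :=
    (locallyIntegrable_of_norm_le_rpow (by simp) (by simp; linarith) (ae_of_all _ hnear)
      hmeas).integrableOn_isCompact (isCompact_closedBall 0 1)
  have htail := integrableOn_compl_closedBall_of_norm_le_rpow one_pos (by simpa using hp₁) hfar hmeas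
  simpa using hball.union htail

theorem integral_one_sub_cos_mul_abs_rpow_neg_pos (hp₁ : 1 < p) (hp₃ : p < 3) :
    0 < ∫ z : ℝ, (1 - cos z) * |z| ^ (-p) := by
  have hnonneg : 0 ≤ fun z : ℝ ↦ (1 - cos z) * |z| ^ (-p) := fun z ↦
    mul_nonneg (sub_nonneg.mpr (cos_le_one z)) (by positivity)
  rw [integral_pos_iff_support_of_nonneg hnonneg (integrable_one_sub_cos_mul_abs_rpow_neg hp₁ hp₃)]
  have hsupp : Ioo 0 1 ⊆ Function.support fun z : ℝ ↦ (1 - cos z) * |z| ^ (-p) := by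
    intro z ⟨hz0, hz1⟩
    have hcos : cos z ≠ 1 := by
      rw [Ne, cos_eq_one_iff_of_lt_of_lt (by linarith [pi_pos]) (by linarith [pi_gt_three])]
      exact hz0.ne'
    exact mul_ne_zero (sub_ne_zero.mpr hcos.symm) (Real.rpow_pos_of_pos (abs_pos.mpr hz0.ne') _).ne'
  exact (by simp : (0 : ENNReal) < volume (Ioo (0 : ℝ) 1)).trans_le (measure_mono hsupp)

theorem sin_sub_sin_sub_div_abs_rpow (x z : ℝ) :
    (sin x - sin (x - z)) / |z| ^ p =
      sin x * ((1 - cos z) * |z| ^ (-p)) + cos x * (sin z / |z| ^ p) := by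
  rw [sin_sub, Real.rpow_neg (abs_nonneg z)]
  ring

theorem integrableOn_and_setIntegral_sin_sub_sin_div_abs_sub_rpow (hp₁ : 1 < p) (hp₃ : p < 3)
    (x : ℝ) {ε : ℝ} (hε : 0 < ε) :
    IntegrableOn (fun y ↦ (sin x - sin y) / |x - y| ^ p) {y : ℝ | ε < |x - y|} ∧
      ∫ y in {y : ℝ | ε < |x - y|}, (sin x - sin y) / |x - y| ^ p =
        sin x * ∫ z in (closedBall 0 ε)ᶜ, (1 - cos z) * |z| ^ (-p) := by
  have hker : IntegrableOn (fun z ↦ sin x * ((1 - cos z) * |z| ^ (-p))) (closedBall 0 ε)ᶜ :=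
    (integrable_one_sub_cos_mul_abs_rpow_neg hp₁ hp₃).integrableOn.const_mul (sin x)
  have hsin := (integrableOn_compl_closedBall_sin_div_abs_rpow hp₁ hε).const_mul (cos x)
  have hodd : ∫ z in (closedBall 0 ε)ᶜ, sin z / |z| ^ p = 0 :=
    setIntegral_eq_zero_of_odd measurableSet_closedBall.compl (by simp)
      fun z ↦ by rw [sin_neg, abs_neg, neg_div]
  set F : ℝ → ℝ := fun z ↦ sin x * ((1 - cos z) * |z| ^ (-p)) + cos x * (sin z / |z| ^ p)
  have hshift : (fun y ↦ (sin x - sin y) / |x - y| ^ p) = fun y ↦ F (x - y) := by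
    funext y
    simpa only [sub_sub_cancel] using sin_sub_sin_sub_div_abs_rpow x (x - y)
  rw [hshift, integrableOn_comp_sub_left_lt_abs_sub_iff, setIntegral_comp_sub_left_lt_abs_sub]
  refine ⟨hker.add hsin, ?_⟩
  rw [integral_add hker hsin, integral_const_mul, integral_const_mul, hodd, mul_zero, add_zero]

end Kernel

/-- `sin` is an eigenfunction of the 1D fractional Laplacian
with eigenvalue 1. -/
theorem sin_eigenfunction_fractionalLaplacian
    (s : ℝ) (hs : s ∈ Set.Ioo (0:ℝ) 1) :
    MeasureTheory.Integrable (fun z : ℝ => (1 - Real.cos z) * |z| ^ (-(1 + 2 * s))) ∧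
    0 < ∫ z : ℝ, (1 - Real.cos z) * |z| ^ (-(1 + 2 * s)) ∧
    ∀ x : ℝ,
      (∀ ε : ℝ, 0 < ε →
        MeasureTheory.IntegrableOn
          (fun y : ℝ => (Real.sin x - Real.sin y) / |x - y| ^ (1 + 2 * s))
          {y : ℝ | ε < |x - y|}) ∧
      Filter.Tendsto
        (fun ε : ℝ =>
          (∫ z : ℝ, (1 - Real.cos z) * |z| ^ (-(1 + 2 * s)))⁻¹ *
            ∫ y in {y : ℝ | ε < |x - y|},
              (Real.sin x - Real.sin y) / |x - y| ^ (1 + 2 * s))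
        (nhdsWithin 0 (Set.Ioi 0)) (nhds (Real.sin x)) := by
  have hp₁ : 1 < 1 + 2 * s := by linarith [hs.1]
  have hp₃ : 1 + 2 * s < 3 := by linarith [hs.2]
  have hint := integrable_one_sub_cos_mul_abs_rpow_neg hp₁ hp₃
  have hpos := integral_one_sub_cos_mul_abs_rpow_neg_pos hp₁ hp₃
  have hpv := integrableOn_and_setIntegral_sin_sub_sin_div_abs_sub_rpow hp₁ hp₃
  refine ⟨hint, hpos, fun x ↦ ⟨fun ε hε ↦ (hpv x hε).1, ?_⟩⟩
  set c := ∫ z : ℝ, (1 - cos z) * |z| ^ (-(1 + 2 * s))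
  have hlim : Tendsto (fun ε ↦ c⁻¹ * (sin x * ∫ z in (closedBall 0 ε)ᶜ,
      (1 - cos z) * |z| ^ (-(1 + 2 * s)))) (𝓝[>] 0) (𝓝 (c⁻¹ * (sin x * c))) :=
    (((tendsto_setIntegral_compl_closedBall hint 0).mono_left nhdsWithin_le_nhds).const_mul
      (sin x)).const_mul c⁻¹
  rw [mul_left_comm, inv_mul_cancel₀ hpos.ne', mul_one] at hlim
  refine hlim.congr' ?_
  filter_upwards [self_mem_nhdsWithin] with ε hε
  rw [(hpv x hε).2]

end
end
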